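/- Assume m is odd, let b be a positive divisor of n, and let p be a prime dividing b with p ≡ 3 (mod 8) or p ≡ 5 (mod 8). Then none of the homogeneous spaces attached to the pairs (b, b), (2b, b), (b, 2b), and (2b, 2b) has a p-adic solution. -/

import Mathlib

/-!
Let `v` be the `p`-adic valuation, `p` odd. If `x² - u y²` has odd valuation for a `p`-adic
unit `u`, then `v x = v y` (otherwise the valuation is `2 min (v x) (v y)`), and `x / y` is a
`p`-adic integer whose square is `u` modulo `p`. Each of the four homogeneous spaces produces
such a relation with `u = 2`. For the pairs `(c, c)` with `c ∈ {b, 2b}` and `m = 2k + 1`, the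
second equation reads `(c z₃)² - 2 (2ᵏ)² = c z₁²`, where `v c = 1` because `p ∣ b ∣ n` with `n`
squarefree. For `(2b, b)` and `(b, 2b)` the first equation makes `z₂² - 2 z₁²`, resp.
`z₁² - 2 z₂²`, equal to `∓ 2ᵐ n² / b`, whose valuation `2 v n - 1` is odd. But `2` is not a
square modulo `p` when `p ≡ ±3 (mod 8)`.
-/

/-- A `K`-solution of the homogeneous space attached to the pair `(b1, b2)`:
a triple `(z1, z2, z3)` in `K^3` with `z1 ≠ 0`, `z2 ≠ 0`, satisfying
`b1·z1² − b2·z2² = 2^m·n²` and `b1·z1² − b1·b2·z3² = −2^m`. -/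
def HSol (K : Type*) [Field K] (m n : ℕ) (b1 b2 : ℤ) (z1 z2 z3 : K) : Prop :=
  z1 ≠ 0 ∧ z2 ≠ 0 ∧
    (b1 : K) * z1 ^ 2 - (b2 : K) * z2 ^ 2 = 2 ^ m * (n : K) ^ 2 ∧
    (b1 : K) * z1 ^ 2 - (b1 : K) * (b2 : K) * z3 ^ 2 = -(2 ^ m)

namespace Padic

variable {p : ℕ} [hp : Fact p.Prime]

theorem valuation_eq_of_norm_eq {x y : ℚ_[p]} (h : ‖x‖ = ‖y‖) :
    x.valuation = y.valuation := by
  rcases eq_or_ne x 0 with rfl | hx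
  · rw [norm_zero, eq_comm, norm_eq_zero] at h
    rw [h]
  have hy : y ≠ 0 := norm_ne_zero_iff.mp (h ▸ norm_ne_zero_iff.mpr hx)
  rw [norm_eq_zpow_neg_valuation hx, norm_eq_zpow_neg_valuation hy] at h
  exact neg_injective <| zpow_right_injective₀ (mod_cast hp.out.pos) (mod_cast hp.out.ne_one) h

theorem valuation_neg (x : ℚ_[p]) : (-x).valuation = x.valuation :=
  valuation_eq_of_norm_eq (norm_neg x)

theorem valuation_eq_zero_of_norm_eq_one {x : ℚ_[p]} (h : ‖x‖ = 1) : x.valuation = 0 := by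
  rw [← valuation_one (p := p)]
  exact valuation_eq_of_norm_eq (h.trans norm_one.symm)

theorem odd_valuation_mul {x y : ℚ_[p]} (hx : Odd x.valuation) (hy : y ≠ 0)
    (hy' : Even y.valuation) : Odd (x * y).valuation := by
  have hx0 : x ≠ 0 := fun h0 => by simp [h0] at hx
  rw [valuation_mul hx0 hy]
  exact hx.add_even hy'

theorem valuation_two (hp2 : p ≠ 2) : (2 : ℚ_[p]).valuation = 0 := by
  rw [valuation_ofNat, padicValNat.eq_zero_of_not_dvd, Nat.cast_zero]
  exact (Nat.prime_dvd_prime_iff_eq hp.out Nat.prime_two).not.mpr hp2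

theorem isSquare_toZMod_of_odd_valuation_sq_sub {u : ℤ_[p]} (hu : ‖u‖ = 1) {t : ℚ_[p]}
    (h : Odd (t ^ 2 - u).valuation) : IsSquare (PadicInt.toZMod u) := by
  have hu' : ‖(u : ℚ_[p])‖ = 1 := hu
  have ht : ‖t‖ = 1 := by
    by_contra ht
    refine Int.not_even_iff_odd.mpr h ?_
    have hne : ‖t ^ 2‖ ≠ ‖-(u : ℚ_[p])‖ := by
      rw [norm_pow, norm_neg, hu']
      exact fun h2 => ht ((pow_eq_one_iff_of_nonneg (norm_nonneg t) two_ne_zero).mp h2)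
    have hmax := add_eq_max_of_ne hne
    rw [← sub_eq_add_neg, norm_neg, hu'] at hmax
    rcases max_choice ‖t ^ 2‖ 1 with h1 | h1 <;> rw [h1] at hmax
    · rw [valuation_eq_of_norm_eq hmax, valuation_pow]
      exact even_two_mul _
    · rw [valuation_eq_zero_of_norm_eq_one hmax]
      exact Even.zero
  set T : ℤ_[p] := ⟨t, ht.le⟩
  have hT : ‖T ^ 2 - u‖ < 1 := lt_of_le_of_ne (PadicInt.norm_le_one _) fun h1 =>
    Int.not_even_iff_odd.mpr h (valuation_eq_zero_of_norm_eq_one h1 ▸ Even.zero)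
  have hker : T ^ 2 - u ∈ RingHom.ker PadicInt.toZMod := by
    rwa [PadicInt.ker_toZMod, IsLocalRing.mem_maximalIdeal, PadicInt.mem_nonunits]
  rw [RingHom.mem_ker, map_sub, map_pow, sub_eq_zero] at hker
  exact ⟨PadicInt.toZMod T, by rw [← hker, sq]⟩

theorem isSquare_two_of_odd_valuation_sq_sub_two_mul_sq (hp2 : p ≠ 2) {x y : ℚ_[p]}
    (h : Odd (x ^ 2 - 2 * y ^ 2).valuation) : IsSquare (2 : ZMod p) := by
  have hy : y ≠ 0 := by
    rintro rfl
    rw [zero_pow two_ne_zero, mul_zero, sub_zero, valuation_pow] at h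
    exact Int.not_even_iff_odd.mpr h (even_two_mul _)
  have h2 : ‖(2 : ℤ_[p])‖ = 1 := by
    exact_mod_cast PadicInt.norm_natCast_eq_one_iff.mpr
      ((Nat.coprime_primes hp.out Nat.prime_two).mpr hp2)
  have hxy : x ^ 2 - 2 * y ^ 2 = ((x / y) ^ 2 - ((2 : ℤ_[p]) : ℚ_[p])) * y ^ 2 := by
    rw [show ((2 : ℤ_[p]) : ℚ_[p]) = 2 from rfl]
    field_simp
  have hne : (x / y) ^ 2 - ((2 : ℤ_[p]) : ℚ_[p]) ≠ 0 := by
    rintro h0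
    rw [hxy, h0, zero_mul, valuation_zero] at h
    exact Int.not_even_iff_odd.mpr h Even.zero
  rw [hxy, valuation_mul hne (pow_ne_zero 2 hy), valuation_pow] at h
  rw [← map_ofNat PadicInt.toZMod 2]
  exact isSquare_toZMod_of_odd_valuation_sq_sub h2 ((Int.odd_add.mp h).mpr (even_two_mul _))

end Padic

section HomogeneousSpace

variable {p : ℕ} [Fact p.Prime] {m n : ℕ} {c : ℤ} {z1 z2 z3 : ℚ_[p]}

open Padic

theorem isSquare_two_of_hSol_self (hp2 : p ≠ 2) (hm : Odd m) (hc : Odd (c : ℚ_[p]).valuation)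
    (h : HSol ℚ_[p] m n c c z1 z2 z3) : IsSquare (2 : ZMod p) := by
  obtain ⟨k, rfl⟩ := hm
  obtain ⟨hz1, -, -, h2⟩ := h
  refine isSquare_two_of_odd_valuation_sq_sub_two_mul_sq hp2 (x := c * z3) (y := 2 ^ k) ?_
  rw [show (c * z3) ^ 2 - 2 * (2 ^ k) ^ 2 = c * z1 ^ 2 by linear_combination -h2]
  exact odd_valuation_mul hc (pow_ne_zero 2 hz1) (by rw [valuation_pow]; exact even_two_mul _)

theorem odd_valuation_of_mul_eq_two_pow_mul_sq (hp2 : p ≠ 2) (hn : n ≠ 0)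
    (hc : Odd (c : ℚ_[p]).valuation) {w : ℚ_[p]} (h : c * w = 2 ^ m * n ^ 2) :
    Odd w.valuation := by
  have hc0 : (c : ℚ_[p]) ≠ 0 := fun h0 => by simp [h0] at hc
  have hw : w = (c : ℚ_[p])⁻¹ * (2 ^ m * n ^ 2) := by rw [← h, inv_mul_cancel_left₀ hc0]
  have h2n : (2 ^ m * n ^ 2 : ℚ_[p]) ≠ 0 := by simp [hn]
  refine hw ▸ odd_valuation_mul (by rw [valuation_inv]; exact hc.neg) h2n ?_
  rw [valuation_mul (by simp) (by simp [hn]), valuation_pow, valuation_pow, valuation_two hp2,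
    mul_zero, zero_add]
  exact even_two_mul _

theorem isSquare_two_of_hSol_two_mul_left (hp2 : p ≠ 2) (hn : n ≠ 0)
    (hc : Odd (c : ℚ_[p]).valuation) (h : HSol ℚ_[p] m n (2 * c) c z1 z2 z3) :
    IsSquare (2 : ZMod p) := by
  obtain ⟨-, -, h1, -⟩ := h
  refine isSquare_two_of_odd_valuation_sq_sub_two_mul_sq hp2 (x := z2) (y := z1) ?_
  rw [← valuation_neg, neg_sub]
  exact odd_valuation_of_mul_eq_two_pow_mul_sq hp2 hn hc (by push_cast at h1; linear_combination h1)

theorem isSquare_two_of_hSol_two_mul_right (hp2 : p ≠ 2) (hn : n ≠ 0)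
    (hc : Odd (c : ℚ_[p]).valuation) (h : HSol ℚ_[p] m n c (2 * c) z1 z2 z3) :
    IsSquare (2 : ZMod p) := by
  obtain ⟨-, -, h1, -⟩ := h
  refine isSquare_two_of_odd_valuation_sq_sub_two_mul_sq hp2 (x := z1) (y := z2) ?_
  exact odd_valuation_of_mul_eq_two_pow_mul_sq hp2 hn hc (by push_cast at h1; linear_combination h1)

end HomogeneousSpace

theorem stmt_8_general (m n : ℕ) (hmodd : Odd m)
    (hnsf : Squarefree n)
    (b : ℕ) (hbn : b ∣ n)
    (p : ℕ) [Fact (Nat.Prime p)] (hpb : p ∣ b)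
    (hp8 : p % 8 = 3 ∨ p % 8 = 5) :
    (¬ ∃ z1 z2 z3 : ℚ_[p], HSol ℚ_[p] m n b b z1 z2 z3) ∧
    (¬ ∃ z1 z2 z3 : ℚ_[p], HSol ℚ_[p] m n (2 * b) b z1 z2 z3) ∧
    (¬ ∃ z1 z2 z3 : ℚ_[p], HSol ℚ_[p] m n b (2 * b) z1 z2 z3) ∧
    (¬ ∃ z1 z2 z3 : ℚ_[p], HSol ℚ_[p] m n (2 * b) (2 * b) z1 z2 z3) := by
  have hp2 : p ≠ 2 := by omega
  have hnsq : ¬ IsSquare (2 : ZMod p) := by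
    rw [ZMod.exists_sq_eq_two_iff hp2]
    omega
  have hb : Odd ((b : ℤ) : ℚ_[p]).valuation := by
    rw [Int.cast_natCast, Padic.valuation_natCast, ← Nat.factorization_def b Fact.out,
      Nat.factorization_eq_one_of_squarefree (hnsf.squarefree_of_dvd hbn) Fact.out hpb]
    exact odd_one
  have h2b : Odd ((2 * b : ℤ) : ℚ_[p]).valuation := by
    rw [Int.cast_mul, mul_comm, Int.cast_ofNat]
    exact Padic.odd_valuation_mul hb two_ne_zero (Padic.valuation_two hp2 ▸ Even.zero)
  refine ⟨?_, ?_, ?_, ?_⟩ <;> rintro ⟨z1, z2, z3, h⟩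
  · exact hnsq (isSquare_two_of_hSol_self hp2 hmodd hb h)
  · exact hnsq (isSquare_two_of_hSol_two_mul_left hp2 hnsf.ne_zero hb h)
  · exact hnsq (isSquare_two_of_hSol_two_mul_right hp2 hnsf.ne_zero hb h)
  · exact hnsq (isSquare_two_of_hSol_self hp2 hmodd h2b h)

theorem stmt_8 (m n q : ℕ) (hm : 0 < m) (hmodd : Odd m) (hnpos : 0 < n)
    (hnodd : Odd n) (hnsf : Squarefree n) (hq : Nat.Prime q) (hqodd : Odd q)
    (hnq : n ^ 2 + 1 = 2 * q)
    (b : ℕ) (hbpos : 0 < b) (hbn : b ∣ n)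
    (p : ℕ) [Fact (Nat.Prime p)] (hpb : p ∣ b)
    (hp8 : p % 8 = 3 ∨ p % 8 = 5) :
    (¬ ∃ z1 z2 z3 : ℚ_[p], HSol ℚ_[p] m n b b z1 z2 z3) ∧
    (¬ ∃ z1 z2 z3 : ℚ_[p], HSol ℚ_[p] m n (2 * b) b z1 z2 z3) ∧
    (¬ ∃ z1 z2 z3 : ℚ_[p], HSol ℚ_[p] m n b (2 * b) z1 z2 z3) ∧
    (¬ ∃ z1 z2 z3 : ℚ_[p], HSol ℚ_[p] m n (2 * b) (2 * b) z1 z2 z3) :=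
  stmt_8_general m n hmodd hnsf b hbn p hpb hp8
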